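/- arXiv:1710.01132 — 4 statements merged into one kernel-verified Lean document; each statement's English description precedes it below -/
import Mathlib

section
/- Let α > 0 and β be real numbers, let λ be a real number, and let n be a natural number. Then for every z > 0, the n-th derivative of the function z ↦ z^{β−1} E_{α,β}(λ z^α) equals z^{β−n−1} E_{α,β−n}(λ z^α). -/
/-!
Write `z ^ (b - 1) * E_{α,b}(λ z ^ α) = ∑ₖ λᵏ z ^ (kα + b - 1) / Γ(kα + b)`. Differentiating
termwise multiplies the `k`-th term by `kα + b - 1`, and `(kα + b - 1) / Γ(kα + b) = 1 / Γ(kα + b - 1)`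
(also at the poles of `Γ`), so one derivative turns `b` into `b - 1`; induction on `n` finishes.
Termwise differentiation is justified locally uniformly on `(0, ∞)`: log-convexity of `Γ` gives
`Γ(t + α) ≥ (t - 1) ^ α Γ(t)`, so the coefficients `1 / Γ(kα + b)` decay faster than any geometric
sequence.
-/

open Filter Real Asymptotics

/-- Two-parameter Mittag-Leffler function `E_{α,β}(x) = ∑ₖ xᵏ / Γ(kα + β)`,
with the convention `1/Γ = 0` at the poles of `Γ` (in Mathlib, `Real.Gamma`
vanishes at nonpositive integers, so division by it gives `0` there). -/
noncomputable def mittagLeffler (a b x : ℝ) : ℝ := ∑' k : ℕ, x ^ k / Real.Gamma (k * a + b)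

open Set

namespace Real

theorem rpow_sub_one_mul_Gamma_le_Gamma_add {t a : ℝ} (ht : 1 < t) (ha : 0 < a) :
    (t - 1) ^ a * Gamma t ≤ Gamma (t + a) := by
  have ht1 : 0 < t - 1 := by linarith
  have hΓ : Gamma t = (t - 1) * Gamma (t - 1) := by
    simpa using Gamma_add_one (s := t - 1) ht1.ne'
  have hslope := convexOn_log_Gamma.slope_mono_adjacent (mem_Ioi.2 ht1)
    (mem_Ioi.2 (by linarith : 0 < t + a)) (by linarith : t - 1 < t) (by linarith : t < t + a)
  have hlog : log (Gamma t) - log (Gamma (t - 1)) = log (t - 1) := by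
    rw [hΓ, log_mul ht1.ne' (Gamma_pos_of_pos ht1).ne']; ring
  simp only [Function.comp_apply, sub_sub_cancel, div_one, add_sub_cancel_left, hlog,
    le_div_iff₀ ha] at hslope
  calc (t - 1) ^ a * Gamma t = exp (log (t - 1) * a + log (Gamma t)) := by
        rw [exp_add, exp_log (Gamma_pos_of_pos (by linarith)), rpow_def_of_pos ht1]
    _ ≤ exp (log (Gamma (t + a))) := exp_le_exp.2 (by linarith)
    _ = Gamma (t + a) := exp_log (Gamma_pos_of_pos (by linarith))

theorem div_Gamma_add_one (s : ℝ) : s / Gamma (s + 1) = (Gamma s)⁻¹ := by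
  rcases eq_or_ne s 0 with rfl | hs
  · simp
  · rw [Gamma_add_one hs, div_mul_cancel_left₀ hs]

theorem summable_norm_pow_div_Gamma {α : ℝ} (hα : 0 < α) (b x : ℝ) :
    Summable fun k : ℕ => ‖x ^ k / Gamma (k * α + b)‖ := by
  have harg : Tendsto (fun k : ℕ => (k : ℝ) * α + b) atTop atTop :=
    tendsto_atTop_add_const_right _ b (tendsto_natCast_atTop_atTop.atTop_mul_const hα)
  have hgrowth : Tendsto (fun k : ℕ => ((k : ℝ) * α + b - 1) ^ α) atTop atTop :=
    (tendsto_rpow_atTop hα).comp (tendsto_atTop_add_const_right _ (-1) harg)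
  refine summable_of_ratio_norm_eventually_le (r := 1 / 2) (by norm_num) ?_
  filter_upwards [harg.eventually_gt_atTop 1, hgrowth.eventually_ge_atTop (2 * ‖x‖)]
    with k ht hpow
  set t := (k : ℝ) * α + b
  have hΓt : 0 < Gamma t := Gamma_pos_of_pos (by linarith)
  have hΓ : 2 * ‖x‖ * Gamma t ≤ Gamma (t + α) :=
    (mul_le_mul_of_nonneg_right hpow hΓt.le).trans (rpow_sub_one_mul_Gamma_le_Gamma_add ht hα)
  have hΓtα : 0 < Gamma (t + α) := Gamma_pos_of_pos (by linarith)
  have hk : ((k + 1 : ℕ) : ℝ) * α + b = t + α := by push_cast; ring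
  rw [hk, norm_norm, norm_norm, norm_div, norm_div, norm_pow, norm_pow,
    norm_of_nonneg hΓt.le, norm_of_nonneg hΓtα.le, div_le_iff₀ hΓtα]
  calc ‖x‖ ^ (k + 1) = 1 / 2 * (‖x‖ ^ k / Gamma t) * (2 * ‖x‖ * Gamma t) := by
        field_simp; ring
    _ ≤ 1 / 2 * (‖x‖ ^ k / Gamma t) * Gamma (t + α) := by gcongr

end Real

noncomputable def mittagLefflerTerm (α b lam : ℝ) (k : ℕ) (y : ℝ) : ℝ :=
  lam ^ k / Gamma (k * α + b) * y ^ ((k : ℝ) * α + b - 1)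

section MittagLefflerTerm

variable {α b lam y : ℝ}

theorem mittagLefflerTerm_eq (hy : 0 < y) (k : ℕ) :
    mittagLefflerTerm α b lam k y = y ^ (b - 1) * ((lam * y ^ α) ^ k / Gamma (k * α + b)) := by
  rw [mittagLefflerTerm, mul_pow, ← rpow_natCast (y ^ α), ← rpow_mul hy.le,
    show (k : ℝ) * α + b - 1 = b - 1 + α * k by ring, rpow_add hy]
  ring

theorem rpow_sub_one_mul_mittagLeffler_eq_tsum (hy : 0 < y) :
    y ^ (b - 1) * mittagLeffler α b (lam * y ^ α) = ∑' k, mittagLefflerTerm α b lam k y := by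
  simp only [mittagLeffler, mittagLefflerTerm_eq hy, tsum_mul_left]

theorem hasDerivAt_mittagLefflerTerm (hy : 0 < y) (k : ℕ) :
    HasDerivAt (mittagLefflerTerm α b lam k) (mittagLefflerTerm α (b - 1) lam k y) y := by
  have h : HasDerivAt (mittagLefflerTerm α b lam k) (lam ^ k / Gamma (k * α + b) *
      (((k : ℝ) * α + b - 1) * y ^ ((k : ℝ) * α + b - 1 - 1))) y :=
    (hasDerivAt_rpow_const (Or.inl hy.ne')).const_mul _
  refine h.congr_deriv ?_
  have hΓ := div_Gamma_add_one ((k : ℝ) * α + (b - 1))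
  rw [show (k : ℝ) * α + (b - 1) + 1 = k * α + b by ring] at hΓ
  rw [mittagLefflerTerm, div_eq_mul_inv _ (Gamma ((k : ℝ) * α + (b - 1))), ← hΓ,
    show (k : ℝ) * α + (b - 1) - 1 = k * α + b - 1 - 1 by ring]
  ring

theorem norm_mittagLefflerTerm_le (hα : 0 ≤ α) (hy : 0 < y) {R M : ℝ} (hyR : y ≤ R)
    (hM : y ^ (b - 1) ≤ M) (k : ℕ) :
    ‖mittagLefflerTerm α b lam k y‖ ≤ M * ‖(lam * R ^ α) ^ k / Gamma (k * α + b)‖ := by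
  rw [mittagLefflerTerm_eq hy, norm_mul, norm_of_nonneg (rpow_pos_of_pos hy _).le]
  gcongr
  · exact (rpow_pos_of_pos hy _).le.trans hM
  · rw [norm_div, norm_div, norm_pow, norm_pow, norm_mul, norm_mul,
      norm_of_nonneg (rpow_pos_of_pos hy _).le, norm_of_nonneg ((rpow_pos_of_pos hy _).le.trans
        (rpow_le_rpow hy.le hyR hα))]
    gcongr

end MittagLefflerTerm

theorem hasDerivAt_rpow_mul_mittagLeffler {α : ℝ} (hα : 0 < α) (b lam : ℝ) {x : ℝ} (hx : 0 < x) :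
    HasDerivAt (fun y => y ^ (b - 1) * mittagLeffler α b (lam * y ^ α))
      (x ^ (b - 1 - 1) * mittagLeffler α (b - 1) (lam * x ^ α)) x := by
  have hpos : ∀ y ∈ Icc (x / 2) (x + 1), 0 < y := fun y hy => by linarith [hy.1]
  obtain ⟨M, hM⟩ := isCompact_Icc.exists_bound_of_continuousOn
    (continuousOn_id.rpow_const fun y hy => Or.inl (hpos y hy).ne' :
      ContinuousOn (fun y : ℝ => y ^ (b - 1 - 1)) (Icc (x / 2) (x + 1)))
  have hxI : x ∈ Ioo (x / 2) (x + 1) := ⟨by linarith, by linarith⟩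
  have hsum : Summable fun k => mittagLefflerTerm α b lam k x := by
    simp only [mittagLefflerTerm_eq hx]
    exact ((summable_norm_pow_div_Gamma hα b _).of_norm).mul_left _
  have hderiv := hasDerivAt_tsum_of_isPreconnected
    ((summable_norm_pow_div_Gamma hα (b - 1) (lam * (x + 1) ^ α)).mul_left M) isOpen_Ioo
    (convex_Ioo _ _).isPreconnected
    (fun k y hy => hasDerivAt_mittagLefflerTerm (hpos y (Ioo_subset_Icc_self hy)) k)
    (fun k y hy => norm_mittagLefflerTerm_le hα.le (hpos y (Ioo_subset_Icc_self hy)) hy.2.le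
      ((le_abs_self _).trans (hM y (Ioo_subset_Icc_self hy))) k)
    hxI hsum hxI
  rw [← rpow_sub_one_mul_mittagLeffler_eq_tsum hx] at hderiv
  refine hderiv.congr_of_eventuallyEq ?_
  filter_upwards [isOpen_Ioo.mem_nhds hxI] with y hy
  exact rpow_sub_one_mul_mittagLeffler_eq_tsum (hpos y (Ioo_subset_Icc_self hy))

theorem mittagLeffler_iteratedDeriv
    (α β lam : ℝ) (n : ℕ) (hα : 0 < α) :
    ∀ z > (0 : ℝ),
      iteratedDeriv n (fun z : ℝ => z ^ (β - 1) * mittagLeffler α β (lam * z ^ α)) z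
        = z ^ (β - (n : ℝ) - 1) * mittagLeffler α (β - (n : ℝ)) (lam * z ^ α) := by
  induction n with
  | zero => simp
  | succ n ih =>
    intro z hz
    have hEq : iteratedDeriv n (fun z : ℝ => z ^ (β - 1) * mittagLeffler α β (lam * z ^ α))
        =ᶠ[nhds z] fun y => y ^ (β - n - 1) * mittagLeffler α (β - n) (lam * y ^ α) :=
      eventually_of_mem (isOpen_Ioi.mem_nhds hz) ih
    rw [iteratedDeriv_succ, hEq.deriv_eq, (hasDerivAt_rpow_mul_mittagLeffler hα _ lam hz).deriv,
      Nat.cast_succ, sub_add_eq_sub_sub]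
end

section
/- Let α > 0 and λ be real numbers. Then for every z > 0, the derivative of the function z ↦ E_α(λ z^α) equals λ z^{α−1} E_{α,α}(λ z^α). -/
open Filter Real Asymptotics

/-!
Log-convexity of `Γ` gives `Γ(y + α) / Γ(y) ≥ (y - 1)^α → ∞`, so by the ratio test the
Mittag-Leffler series converges for every `x`: it is an entire power series and may be
differentiated termwise. Since `Γ((k + 1)α + 1) = (k + 1)α · Γ(kα + α)`, this gives
`E_α' = E_{α,α} / α`, and the chain rule with `(λ z^α)' = λ α z^(α-1)` finishes.
-/

namespace Real

/-- The secant slopes of `log ∘ Γ` increase, and over `[y - 1, y]` the slope is `log (y - 1)`. -/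
theorem sub_one_rpow_le_Gamma_add_div_Gamma {y α : ℝ} (hy : 1 < y) (hα : 0 < α) :
    (y - 1) ^ α ≤ Gamma (y + α) / Gamma y := by
  have hy₀ : 0 < y - 1 := by linarith
  have hΓ : Gamma y = (y - 1) * Gamma (y - 1) := by
    rw [← Gamma_add_one hy₀.ne', sub_add_cancel]
  have hΓ₀ := Gamma_pos_of_pos hy₀
  have hΓα := Gamma_pos_of_pos (by linarith : 0 < y + α)
  have hslope := convexOn_log_Gamma.slope_mono_adjacent (Set.mem_Ioi.2 hy₀)
    (Set.mem_Ioi.2 (by linarith : 0 < y + α)) (sub_one_lt y) (lt_add_of_pos_right y hα)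
  simp only [Function.comp_apply, hΓ, log_mul hy₀.ne' hΓ₀.ne', sub_sub_cancel, div_one,
    add_sub_cancel_left, add_sub_cancel_right] at hslope
  rw [le_div_iff₀ hα] at hslope
  rw [← log_le_log_iff (by positivity) (div_pos hΓα (by positivity)), log_rpow hy₀,
    log_div hΓα.ne' (by positivity), hΓ, log_mul hy₀.ne' hΓ₀.ne']
  linarith

theorem tendsto_Gamma_add_div_Gamma_atTop {α : ℝ} (hα : 0 < α) :
    Tendsto (fun y => Gamma (y + α) / Gamma y) atTop atTop := by
  refine tendsto_atTop_mono' _ ?_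
    ((tendsto_rpow_atTop hα).comp (tendsto_atTop_add_const_right _ (-1) tendsto_id))
  filter_upwards [eventually_gt_atTop 1] with y hy
  simpa [sub_eq_add_neg] using sub_one_rpow_le_Gamma_add_div_Gamma hy hα

end Real

theorem summable_pow_div_Gamma {a b : ℝ} (ha : 0 < a) (hb : 0 < b) (x : ℝ) :
    Summable fun k : ℕ => x ^ k / Gamma (k * a + b) := by
  have hΓ (k : ℕ) : 0 < Gamma (k * a + b) := Gamma_pos_of_pos (by positivity)
  have harg : Tendsto (fun k : ℕ => (k : ℝ) * a + b) atTop atTop :=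
    tendsto_atTop_add_const_right _ b (tendsto_natCast_atTop_atTop.atTop_mul_const ha)
  refine summable_of_ratio_norm_eventually_le one_half_lt_one ?_
  filter_upwards [harg.eventually
    ((tendsto_Gamma_add_div_Gamma_atTop ha).eventually_ge_atTop (2 * |x|))] with k hk
  rw [le_div_iff₀ (hΓ k)] at hk
  have hk' : 2 * |x| * Gamma (k * a + b) ≤ Gamma ((k + 1 : ℕ) * a + b) := by
    rwa [show ((k + 1 : ℕ) : ℝ) * a + b = k * a + b + a by push_cast; ring]
  simp only [norm_div, norm_eq_abs, abs_pow, abs_mul, abs_of_pos (hΓ _), pow_succ]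
  rw [div_le_iff₀ (hΓ _)]
  calc |x| ^ k * |x|
      = 1 / 2 * (|x| ^ k / Gamma (k * a + b)) * (2 * |x| * Gamma (k * a + b)) := by
        field_simp [(hΓ k).ne']
    _ ≤ 1 / 2 * (|x| ^ k / Gamma (k * a + b)) * Gamma ((k + 1 : ℕ) * a + b) := by gcongr

theorem hasDerivAt_tsum_mul_pow {c : ℕ → ℝ} (hc : ∀ r, Summable fun k => c k * r ^ k) (x : ℝ) :
    HasDerivAt (fun y => ∑' k, c k * y ^ k) (∑' k, (k + 1) * c (k + 1) * x ^ k) x := by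
  set R := |x| + 1
  have hR : 1 ≤ R := le_add_of_nonneg_left (abs_nonneg x)
  have hx : x ∈ Metric.ball 0 R := by simp [R]
  have hbound : ∀ k y, y ∈ Metric.ball (0 : ℝ) R →
      ‖c k * (k * y ^ (k - 1))‖ ≤ |c k * (2 * R) ^ k| := by
    intro k y hy
    rw [mem_ball_zero_iff, norm_eq_abs] at hy
    have hk : (k : ℝ) ≤ 2 ^ k := mod_cast Nat.lt_two_pow_self.le
    have hy' : |y| ^ (k - 1) ≤ R ^ k :=
      (pow_le_pow_left₀ (abs_nonneg y) hy.le _).trans (pow_le_pow_right₀ hR (Nat.sub_le k 1))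
    rw [norm_eq_abs, abs_mul, abs_mul, abs_mul, abs_pow, abs_pow, Nat.abs_cast,
      abs_of_pos (by positivity : (0 : ℝ) < 2 * R), mul_pow]
    gcongr
  have hderiv := hasDerivAt_tsum_of_isPreconnected (hc (2 * R)).abs Metric.isOpen_ball
    (convex_ball 0 R).isPreconnected (fun k y _ => (hasDerivAt_pow k y).const_mul (c k))
    hbound hx (hc x) hx
  rw [(Summable.of_norm_bounded (hc (2 * R)).abs (hbound · x hx)).tsum_eq_zero_add] at hderiv
  refine hderiv.congr_deriv ?_
  simp only [Nat.cast_zero, zero_mul, mul_zero, zero_add, add_tsub_cancel_right, Nat.cast_succ]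
  exact tsum_congr fun k => by ring

theorem hasDerivAt_mittagLeffler_one {α : ℝ} (hα : 0 < α) (x : ℝ) :
    HasDerivAt (mittagLeffler α 1) (mittagLeffler α α x / α) x := by
  have hc (r : ℝ) : Summable fun k : ℕ => (Gamma (k * α + 1))⁻¹ * r ^ k := by
    simpa only [div_eq_inv_mul] using summable_pow_div_Gamma hα one_pos r
  have hterm (k : ℕ) : ((k : ℝ) + 1) * (Gamma ((k + 1 : ℕ) * α + 1))⁻¹ * x ^ k
      = x ^ k / Gamma (k * α + α) / α := by
    have hk : 0 < (k : ℝ) * α + α := by positivity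
    rw [show ((k + 1 : ℕ) : ℝ) * α + 1 = k * α + α + 1 by push_cast; ring,
      Gamma_add_one hk.ne']
    field_simp
  have h := hasDerivAt_tsum_mul_pow hc x
  simp only [hterm, tsum_div_const, ← div_eq_inv_mul] at h
  exact h

theorem mittagLeffler_one_deriv
    (α lam : ℝ) (hα : 0 < α) :
    ∀ z > (0 : ℝ),
      deriv (fun z : ℝ => mittagLeffler α 1 (lam * z ^ α)) z
        = lam * z ^ (α - 1) * mittagLeffler α α (lam * z ^ α) := by
  intro z hz
  have hinner : HasDerivAt (fun z => lam * z ^ α) (lam * (α * z ^ (α - 1))) z :=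
    (hasDerivAt_rpow_const (Or.inl hz.ne')).const_mul lam
  refine ((hasDerivAt_mittagLeffler_one hα _).comp z hinner).deriv.trans ?_
  field_simp
end

section
/- Let α > 0 and λ be real numbers. Then for every z > 0, the derivative of the function z ↦ z · E_{α,2}(λ z^α) equals E_α(λ z^α). -/
open Filter Real Asymptotics

lemma summable_pow_div_gamma (α b r : ℝ) (hα : 0 < α) (hb : 1 ≤ b) (hr : 0 ≤ r) :
    Summable fun n : ℕ => r ^ n / Real.Gamma (n * α + b) := by
  set q : ℝ := (2 * r + 1) ^ (α⁻¹) with hqdef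
  have h2r : (0:ℝ) < 2 * r + 1 := by linarith
  have hq0 : 0 < q := Real.rpow_pos_of_pos h2r _
  have hqα : q ^ α = 2 * r + 1 := by
    rw [hqdef, ← Real.rpow_mul h2r.le, inv_mul_cancel₀ hα.ne', Real.rpow_one]
  -- eventually (q+1)^k ≤ k!
  have hfac : ∀ᶠ k : ℕ in atTop, (q + 1) ^ k ≤ (k.factorial : ℝ) := by
    have h0 := (Real.summable_pow_div_factorial (q + 1)).tendsto_atTop_zero
    filter_upwards [h0.eventually (eventually_le_nhds one_pos)] with k hk
    have hfp : (0:ℝ) < (k.factorial : ℝ) := by positivity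
    calc (q+1)^k = ((q+1)^k / k.factorial) * k.factorial := by field_simp
    _ ≤ 1 * k.factorial := by gcongr
    _ = (k.factorial : ℝ) := one_mul _
  -- floor sequence tends to atTop
  have hlin : Tendsto (fun n : ℕ => (n : ℝ) * α + b - 1) atTop atTop := by
    simp only [add_sub_assoc]
    exact tendsto_atTop_add_const_right _ (b - 1)
      (tendsto_natCast_atTop_atTop.atTop_mul_const hα)
  have hk : Tendsto (fun n : ℕ => ⌊(n : ℝ) * α + b - 1⌋₊) atTop atTop :=
    tendsto_nat_floor_atTop.comp hlin
  have hna : ∀ᶠ n : ℕ in atTop, 2 ≤ (n : ℝ) * α :=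
    (tendsto_natCast_atTop_atTop.atTop_mul_const hα).eventually_ge_atTop 2
  -- main eventual bound
  have hbound : ∀ᶠ n : ℕ in atTop,
      r ^ n / Real.Gamma ((n : ℝ) * α + b) ≤ q * (1/2) ^ n := by
    filter_upwards [hk.eventually hfac, hna] with n hfk hn2
    set x : ℝ := (n : ℝ) * α + b with hxdef
    set k : ℕ := ⌊x - 1⌋₊ with hkdef
    have hx3 : (3:ℝ) ≤ x := by rw [hxdef]; linarith
    have hk1 : (k:ℝ) ≤ x - 1 := Nat.floor_le (by linarith)
    have hkge : x - 2 < (k:ℝ) := by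
      have := Nat.sub_one_lt_floor (x - 1)
      rw [← hkdef] at this; linarith
    have hΓk : ((k.factorial : ℕ) : ℝ) ≤ Real.Gamma x := by
      have he : Real.Gamma ((k:ℝ) + 1) = k.factorial := Real.Gamma_nat_eq_factorial k
      rw [← he]
      exact Real.Gamma_strictMonoOn_Ici.monotoneOn
        (by simp only [Set.mem_Ici]; linarith)
        (by simp only [Set.mem_Ici]; linarith) (by linarith)
    have hchain : (2 * r + 1) ^ n / q ≤ Real.Gamma x := by
      have h1 : (q + 1 : ℝ) ^ ((k : ℝ)) ≤ (k.factorial : ℝ) := by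
        rwa [Real.rpow_natCast]
      have h2 : (q + 1 : ℝ) ^ ((n:ℝ) * α - 1) ≤ (q + 1) ^ ((k:ℝ)) :=
        Real.rpow_le_rpow_of_exponent_le (by linarith) (by rw [hxdef] at hkge; linarith)
      have h3 : q ^ ((n:ℝ) * α - 1) ≤ (q + 1) ^ ((n:ℝ) * α - 1) :=
        Real.rpow_le_rpow hq0.le (by linarith) (by linarith)
      have h4 : q ^ ((n:ℝ) * α - 1) = (2 * r + 1) ^ n / q := by
        rw [Real.rpow_sub hq0, Real.rpow_one, mul_comm (n:ℝ) α,
          Real.rpow_mul hq0.le, Real.rpow_natCast, hqα]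
      rw [← h4]
      calc q ^ ((n:ℝ) * α - 1) ≤ (q + 1) ^ ((n:ℝ) * α - 1) := h3
        _ ≤ (q + 1) ^ ((k:ℝ)) := h2
        _ ≤ (k.factorial : ℝ) := h1
        _ ≤ Real.Gamma x := hΓk
    have hpos : (0:ℝ) < (2 * r + 1) ^ n / q := by positivity
    calc r ^ n / Real.Gamma x ≤ r ^ n / ((2 * r + 1) ^ n / q) :=
          div_le_div_of_nonneg_left (by positivity) hpos hchain
      _ = q * (r / (2 * r + 1)) ^ n := by rw [div_pow]; field_simp
      _ ≤ q * (1/2) ^ n := by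
          have hd : r / (2 * r + 1) ≤ 1/2 := by
            rw [div_le_div_iff₀ h2r (by norm_num)]; linarith
          exact mul_le_mul_of_nonneg_left
            (pow_le_pow_left₀ (div_nonneg hr h2r.le) hd n) hq0.le
  -- conclude by comparison
  refine summable_of_isBigO_nat (g := fun n : ℕ => (1/2 : ℝ) ^ n)
    (summable_geometric_of_lt_one (by norm_num) (by norm_num)) ?_
  rw [isBigO_iff]
  refine ⟨q, ?_⟩
  filter_upwards [hbound] with n hn
  have h1 : (0:ℝ) ≤ r ^ n / Real.Gamma ((n:ℝ) * α + b) := by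
    have := Real.Gamma_pos_of_pos (show (0:ℝ) < (n:ℝ)*α + b by positivity)
    positivity
  rw [Real.norm_eq_abs, Real.norm_eq_abs, abs_of_nonneg h1, abs_of_nonneg (by positivity)]
  exact hn

theorem mittagLeffler_two_deriv
    (α lam : ℝ) (hα : 0 < α) :
    ∀ z > (0 : ℝ),
      deriv (fun z : ℝ => z * mittagLeffler α 2 (lam * z ^ α)) z
        = mittagLeffler α 1 (lam * z ^ α) := by
  intro z hz
  set R : ℝ := z + 1 with hRdef
  have hR : 0 < R := by linarith
  have hzs : z ∈ Set.Ioo (0:ℝ) R := ⟨hz, by rw [hRdef]; linarith⟩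
  set c : ℕ → ℝ := fun n => lam ^ n / Real.Gamma ((n:ℝ) * α + 2) with hcdef
  set g : ℕ → ℝ → ℝ := fun n y => c n * y ^ ((n:ℝ) * α + 1) with hgdef
  set g' : ℕ → ℝ → ℝ := fun n y => c n * (((n:ℝ) * α + 1) * y ^ ((n:ℝ) * α)) with hg'def
  set u : ℕ → ℝ := fun n => (|lam| * R ^ α) ^ n / Real.Gamma ((n:ℝ) * α + 1) with hudef
  have hΓ1pos : ∀ n : ℕ, 0 < Real.Gamma ((n:ℝ) * α + 1) := fun n =>
    Real.Gamma_pos_of_pos (by positivity)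
  have hΓ2pos : ∀ n : ℕ, 0 < Real.Gamma ((n:ℝ) * α + 2) := fun n =>
    Real.Gamma_pos_of_pos (by positivity)
  have hΓ2 : ∀ n : ℕ, Real.Gamma ((n:ℝ) * α + 2)
      = ((n:ℝ) * α + 1) * Real.Gamma ((n:ℝ) * α + 1) := by
    intro n
    have h := Real.Gamma_add_one (show ((n:ℝ) * α + 1) ≠ 0 by positivity)
    rw [show (n:ℝ) * α + 2 = (n:ℝ) * α + 1 + 1 by ring, h]
  have hRpow : ∀ n : ℕ, R ^ ((n:ℝ) * α) = (R ^ α) ^ n := by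
    intro n
    rw [mul_comm, Real.rpow_mul hR.le, Real.rpow_natCast]
  have hu : Summable u := by
    simpa [hudef] using summable_pow_div_gamma α 1 (|lam| * R ^ α) hα le_rfl (by positivity)
  have hg : ∀ n : ℕ, ∀ y ∈ Set.Ioo (0:ℝ) R, HasDerivAt (g n) (g' n y) y := by
    intro n y hy
    have h := (Real.hasDerivAt_rpow_const (x := y) (p := (n:ℝ) * α + 1)
      (Or.inl hy.1.ne')).const_mul (c n)
    simpa [hgdef, hg'def, add_sub_cancel_right] using h
  have hg' : ∀ n : ℕ, ∀ y ∈ Set.Ioo (0:ℝ) R, ‖g' n y‖ ≤ u n := by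
    intro n y hy
    have hyp : (0:ℝ) < y ^ ((n:ℝ) * α) := Real.rpow_pos_of_pos hy.1 _
    have hyR : y ^ ((n:ℝ) * α) ≤ R ^ ((n:ℝ) * α) :=
      Real.rpow_le_rpow hy.1.le hy.2.le (by positivity)
    have h1 : ‖g' n y‖ = |lam| ^ n / Real.Gamma ((n:ℝ) * α + 2)
        * (((n:ℝ) * α + 1) * y ^ ((n:ℝ) * α)) := by
      simp only [hg'def, hcdef]
      rw [Real.norm_eq_abs, abs_mul, abs_div, abs_pow,
        abs_of_nonneg (hΓ2pos n).le,
        abs_of_nonneg (mul_nonneg (by positivity) hyp.le)]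
    rw [h1, hΓ2 n]
    simp only [hudef]
    rw [mul_pow, ← hRpow n]
    rw [div_mul_eq_mul_div, mul_div_assoc]
    have hne : ((n:ℝ) * α + 1) ≠ 0 := by positivity
    rw [show ((n:ℝ) * α + 1) * y ^ ((n:ℝ) * α) / (((n:ℝ) * α + 1) * Real.Gamma ((n:ℝ) * α + 1))
        = y ^ ((n:ℝ) * α) / Real.Gamma ((n:ℝ) * α + 1) by
      rw [mul_div_mul_left _ _ hne]]
    rw [mul_div_assoc]
    gcongr
    all_goals first | exact (hΓ1pos n).le | exact hyR | positivity
  have hg0 : Summable fun n => g n z := by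
    apply Summable.of_norm_bounded
      (g := fun n : ℕ => R * ((|lam| * R ^ α) ^ n / Real.Gamma ((n:ℝ) * α + 2)))
      (((summable_pow_div_gamma α 2 (|lam| * R ^ α) hα (by norm_num) (by positivity))).mul_left R)
    intro n
    have hzp : z ^ ((n:ℝ) * α + 1) = z ^ ((n:ℝ) * α) * z := by
      rw [Real.rpow_add hz, Real.rpow_one]
    have hzR : z ^ ((n:ℝ) * α) ≤ R ^ ((n:ℝ) * α) :=
      Real.rpow_le_rpow hz.le hzs.2.le (by positivity)
    have h1 : ‖g n z‖ = |lam| ^ n / Real.Gamma ((n:ℝ) * α + 2) * (z ^ ((n:ℝ) * α) * z) := by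
      simp only [hgdef, hcdef]
      rw [Real.norm_eq_abs, abs_mul, abs_div, abs_pow,
        abs_of_nonneg (hΓ2pos n).le, abs_of_nonneg (Real.rpow_pos_of_pos hz _).le, hzp]
    rw [h1, mul_pow, ← hRpow n]
    calc |lam| ^ n / Real.Gamma ((n:ℝ) * α + 2) * (z ^ ((n:ℝ) * α) * z)
        ≤ |lam| ^ n / Real.Gamma ((n:ℝ) * α + 2) * (R ^ ((n:ℝ) * α) * R) := by
          gcongr
          all_goals first | exact hzR | exact hzs.2.le | exact hz.le | positivity
      _ = R * (|lam| ^ n * R ^ ((n:ℝ) * α) / Real.Gamma ((n:ℝ) * α + 2)) := by ring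
  have key := hasDerivAt_tsum_of_isPreconnected hu isOpen_Ioo isPreconnected_Ioo
    hg hg' hzs hg0 hzs
  have heq : ∀ y ∈ Set.Ioo (0:ℝ) R, y * mittagLeffler α 2 (lam * y ^ α) = ∑' n, g n y := by
    intro y hy
    rw [mittagLeffler, ← tsum_mul_left]
    refine tsum_congr fun k => ?_
    have h1 : (lam * y ^ α) ^ k = lam ^ k * y ^ (α * (k:ℝ)) := by
      rw [mul_pow, Real.rpow_mul hy.1.le, Real.rpow_natCast]
    have h2 : y ^ ((k:ℝ) * α + 1) = y ^ (α * (k:ℝ)) * y := by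
      rw [Real.rpow_add hy.1, Real.rpow_one, mul_comm (k:ℝ) α]
    simp only [hgdef, hcdef]
    rw [h1, h2]
    field_simp
  have key' : HasDerivAt (fun y : ℝ => y * mittagLeffler α 2 (lam * y ^ α))
      (∑' n, g' n z) z :=
    key.congr_of_eventuallyEq
      (Filter.eventuallyEq_of_mem (isOpen_Ioo.mem_nhds hzs) heq)
  rw [key'.deriv]
  rw [mittagLeffler]
  refine tsum_congr fun k => ?_
  have h1 : (lam * z ^ α) ^ k = lam ^ k * z ^ ((k:ℝ) * α) := by
    rw [mul_pow, mul_comm (k:ℝ) α, Real.rpow_mul hz.le, Real.rpow_natCast]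
  simp only [hg'def, hcdef]
  rw [hΓ2 k, h1]
  have hne : ((k:ℝ) * α + 1) ≠ 0 := by positivity
  field_simp
end

section
/- Let α > 0 and β be real numbers. Then for every real number x, the series ∑_{k=0}^∞ x^k / Γ(kα + β) defining the two-parameter Mittag-Leffler function E_{α,β}(x) is summable (converges absolutely). -/
/-!
Ratio test: by log-convexity of `Γ`, `Γ(t + α) ≥ (t - 1)^α Γ(t)` for `t > 1`, so the ratio of
consecutive terms, `|x| Γ(kα + β) / Γ(kα + β + α)`, tends to `0`.
-/

open Filter Topology

namespace Real

/-- The slope of `log ∘ Γ` on `[t - 1, t]` is `log (t - 1)`, and by convexity it is at most the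
slope on `[t, t + a]`. -/
theorem log_Gamma_add_mul_log_sub_one_le {t a : ℝ} (ht : 1 < t) (ha : 0 < a) :
    log (Gamma t) + a * log (t - 1) ≤ log (Gamma (t + a)) := by
  have hslope := (convexOn_iff_slope_mono_adjacent.mp convexOn_log_Gamma).2
    (Set.mem_Ioi.mpr (sub_pos.mpr ht)) (Set.mem_Ioi.mpr (by linarith : 0 < t + a))
    (sub_one_lt t) (lt_add_of_pos_right t ha)
  have hrec : Gamma t = (t - 1) * Gamma (t - 1) := by
    simpa using Gamma_add_one (sub_pos.mpr ht).ne'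
  have hlog : log (Gamma (t - 1)) = log (Gamma t) - log (t - 1) := by
    rw [hrec, log_mul (sub_pos.mpr ht).ne' (Gamma_pos_of_pos (sub_pos.mpr ht)).ne']
    ring
  simp only [Function.comp_apply, hlog, sub_sub_cancel, div_one, add_sub_cancel_left] at hslope
  rw [le_div_iff₀ ha] at hslope
  linarith

theorem Gamma_mul_rpow_le_Gamma_add {t a : ℝ} (ht : 1 < t) (ha : 0 < a) :
    Gamma t * (t - 1) ^ a ≤ Gamma (t + a) := by
  have hle := exp_le_exp.mpr (log_Gamma_add_mul_log_sub_one_le ht ha)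
  rwa [exp_add, exp_log (Gamma_pos_of_pos (by linarith)),
    exp_log (Gamma_pos_of_pos (by linarith)), mul_comm a,
    ← rpow_def_of_pos (sub_pos.mpr ht)] at hle

theorem tendsto_Gamma_div_Gamma_add_atTop {a : ℝ} (ha : 0 < a) :
    Tendsto (fun t => Gamma t / Gamma (t + a)) atTop (𝓝 0) := by
  have hbound : Tendsto (fun t : ℝ => (t - 1) ^ (-a)) atTop (𝓝 0) :=
    (tendsto_rpow_neg_atTop ha).comp (tendsto_atTop_add_const_right _ (-1) tendsto_id)
  refine tendsto_of_tendsto_of_tendsto_of_le_of_le' tendsto_const_nhds hbound ?_ ?_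
  · filter_upwards [eventually_gt_atTop 0] with t ht
    exact div_nonneg (Gamma_pos_of_pos ht).le (Gamma_pos_of_pos (by linarith)).le
  · filter_upwards [eventually_gt_atTop 1] with t ht
    have hpow : 0 < (t - 1) ^ a := rpow_pos_of_pos (sub_pos.mpr ht) a
    rw [div_le_iff₀ (Gamma_pos_of_pos (by linarith)), rpow_neg (sub_pos.mpr ht).le,
      inv_mul_eq_div, le_div_iff₀ hpow]
    exact Gamma_mul_rpow_le_Gamma_add ht ha

end Real

theorem summable_pow_div_of_tendsto_div_succ {g : ℕ → ℝ} (hpos : ∀ᶠ n in atTop, 0 < g n)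
    (hratio : Tendsto (fun n => g n / g (n + 1)) atTop (𝓝 0)) (x : ℝ) :
    Summable fun n => x ^ n / g n := by
  refine summable_of_ratio_norm_eventually_le one_half_lt_one ?_
  have hsmall : ∀ᶠ n in atTop, |x| * (g n / g (n + 1)) ≤ 1 / 2 :=
    (hratio.const_mul |x|).eventually (ge_mem_nhds (by norm_num))
  filter_upwards [hpos, (tendsto_add_atTop_nat 1).eventually hpos, hsmall] with n hn hn1 hxn
  simp only [norm_div, norm_pow, Real.norm_eq_abs, abs_of_pos hn, abs_of_pos hn1]
  calc |x| ^ (n + 1) / g (n + 1) = |x| * (g n / g (n + 1)) * (|x| ^ n / g n) := by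
        field_simp
        ring
    _ ≤ 1 / 2 * (|x| ^ n / g n) := by gcongr

theorem mittagLeffler_summable
    (α β : ℝ) (hα : 0 < α) (x : ℝ) :
    Summable fun k : ℕ => x ^ k / Real.Gamma (k * α + β) := by
  have hargs : Tendsto (fun k : ℕ => (k : ℝ) * α + β) atTop atTop :=
    tendsto_atTop_add_const_right _ β (tendsto_natCast_atTop_atTop.atTop_mul_const hα)
  refine summable_pow_div_of_tendsto_div_succ ?_ ?_ x
  · filter_upwards [hargs.eventually_gt_atTop 0] with k hk
    exact Real.Gamma_pos_of_pos hk
  · have hshift (k : ℕ) : ((k + 1 : ℕ) : ℝ) * α + β = (k * α + β) + α := by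
      push_cast; ring
    simpa only [hshift, Function.comp_def] using
      (Real.tendsto_Gamma_div_Gamma_add_atTop hα).comp hargs
end
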